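/- Fix b > 0 with r := 1/(2b) ∉ ℕ, set n := ⌊r⌋ + 1, and define positions x_j for j = 1,…,2n by x_j := (j−1)/(2r) if j is odd and x_j := 1 − (2n−j)/(2r) if j is even. Let m_1,…,m_{2n} ≥ 0 with Σ_j m_j = 1, set m_0 := 0, and let μ := Σ_{j=1}^{2n} m_j·δ_{x_j}. Fix j ∈ {1,…,2n−2} and assume m_{j−1} + m_j > 0, m_j + m_{j+1} > 0, and m_{j+1} + m_{j+2} > 0. Then the marginal information density i(x; μ) := −r·∫_{x−b}^{x+b} log(2b·p_Y(y; μ)) dy, with p_Y(y; μ) := r·μ([y−b, y+b] ∩ [0,1]), is affine in x on [x_j, x_{j+1}] with slope r·log((m_{j−1} + m_j)/(m_{j+1} + m_{j+2})). -/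

import Mathlib

open MeasureTheory Set

/-- Output density of the additive uniform noise channel:
`p_Y(y; μ) = r · μ([y−b, y+b] ∩ [0,1])`. -/
noncomputable def outDen (r b : ℝ) (μ : Measure ℝ) (y : ℝ) : ℝ :=
  r * (μ (Icc (y - b) (y + b) ∩ Icc 0 1)).toReal

/-- Marginal information density of the additive uniform noise channel:
`i(x; μ) = −r · ∫_{x−b}^{x+b} log(2b · p_Y(y; μ)) dy`. -/
noncomputable def margInfo (r b : ℝ) (μ : Measure ℝ) (x : ℝ) : ℝ :=
  -r * ∫ y in (x - b)..(x + b), Real.log (2 * b * outDen r b μ y)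

lemma step_int {f : ℝ → ℝ} {a b a' b' c : ℝ} (ha : a' ≤ a) (hab : a ≤ b) (hb : b ≤ b')
    (hf : ∀ y ∈ Ioo a' b', f y = c) :
    IntervalIntegrable f MeasureTheory.volume a b ∧ ∫ y in a..b, f y = c * (b - a) := by
  have hae : ∀ᵐ (y : ℝ), y ∈ Set.uIoc a b → f y = c := by
    have h0 : ∀ᵐ (y : ℝ), y ≠ b' := by
      have h1 : (volume : Measure ℝ) {b'} = 0 := measure_singleton b'
      rw [← MeasureTheory.compl_mem_ae_iff] at h1
      filter_upwards [h1] with y hy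
      simpa using hy
    filter_upwards [h0] with y hy hyI
    rw [Set.uIoc_of_le hab] at hyI
    exact hf y ⟨lt_of_le_of_lt ha hyI.1, lt_of_le_of_ne (hyI.2.trans hb) hy⟩
  have hii : IntervalIntegrable f MeasureTheory.volume a b := by
    rw [intervalIntegrable_iff]
    have hconst : IntegrableOn (fun _ : ℝ => c) (Set.uIoc a b) volume :=
      integrableOn_const (by rw [Set.uIoc_of_le hab]; exact measure_Ioc_lt_top.ne)
    refine hconst.congr ?_
    rw [Filter.EventuallyEq, MeasureTheory.ae_restrict_iff' measurableSet_uIoc]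
    filter_upwards [hae] with y hy hyI
    exact (hy hyI).symm
  refine ⟨hii, ?_⟩
  rw [intervalIntegral.integral_congr_ae hae, intervalIntegral.integral_const, smul_eq_mul,
    mul_comm]

open scoped Classical in
lemma pair_sum (m : ℕ → ℝ) (N a : ℕ) (hm0 : m 0 = 0) (haN : a + 1 ≤ N) :
    ∑ k ∈ Finset.Icc 1 N, (if k = a ∨ k = a + 1 then m k else 0) = m a + m (a + 1) := by
  have hsplit : ∀ k, (if k = a ∨ k = a + 1 then m k else 0)
      = (if k = a then m k else 0) + (if k = a + 1 then m k else 0) := by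
    intro k
    by_cases h1 : k = a <;> by_cases h2 : k = a + 1 <;> simp_all
  simp only [hsplit, Finset.sum_add_distrib]
  rw [Finset.sum_ite_eq' (Finset.Icc 1 N) a m, Finset.sum_ite_eq' (Finset.Icc 1 N) (a+1) m]
  have ha2 : a + 1 ∈ Finset.Icc 1 N := Finset.mem_Icc.2 ⟨by omega, haN⟩
  rcases Nat.eq_zero_or_pos a with h | h
  · subst h
    have : (0 : ℕ) ∉ Finset.Icc 1 N := by simp
    simp [this, ha2, hm0]
  · have ha1 : a ∈ Finset.Icc 1 N := Finset.mem_Icc.2 ⟨h, by omega⟩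
    simp [ha1, ha2]

open scoped Classical in
lemma mass_eval (n : ℕ) (m : ℕ → ℝ) (hmnn : ∀ j ∈ Finset.Icc 1 (2*n), 0 ≤ m j)
    (x : ℕ → ℝ) (μ : Measure ℝ)
    (hμ : μ = ∑ j ∈ Finset.Icc 1 (2 * n), ENNReal.ofReal (m j) • Measure.dirac (x j))
    (S : Set ℝ) (hS : MeasurableSet S) :
    (μ S).toReal = ∑ k ∈ Finset.Icc 1 (2*n), (if x k ∈ S then m k else 0) := by
  subst hμ
  rw [Measure.finset_sum_apply]
  rw [ENNReal.toReal_sum]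
  · refine Finset.sum_congr rfl fun k hk => ?_
    rw [Measure.smul_apply, Measure.dirac_apply' _ hS, smul_eq_mul]
    by_cases h : x k ∈ S
    · simp [Set.indicator_of_mem h, ENNReal.toReal_ofReal (hmnn k hk), h]
    · simp [Set.indicator_of_notMem h, h]
  · intro k hk
    rw [Measure.smul_apply, Measure.dirac_apply' _ hS, smul_eq_mul]
    exact ENNReal.mul_ne_top ENNReal.ofReal_ne_top (by
      by_cases h : x k ∈ S
      · simp [Set.indicator_of_mem h]
      · simp [Set.indicator_of_notMem h])

theorem stmt6 (b r : ℝ) (hb : 0 < b) (hr : r = 1 / (2 * b))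
    (hrnat : ¬ ∃ k : ℕ, r = (k : ℝ))
    (n : ℕ) (hn : n = ⌊r⌋₊ + 1)
    (x : ℕ → ℝ)
    (hxo : ∀ j, j % 2 = 1 → x j = ((j : ℝ) - 1) / (2 * r))
    (hxe : ∀ j, j % 2 = 0 → x j = 1 - ((2 * (n : ℝ)) - (j : ℝ)) / (2 * r))
    (m : ℕ → ℝ) (hm0 : m 0 = 0)
    (hmnn : ∀ j ∈ Finset.Icc 1 (2 * n), 0 ≤ m j)
    (hsum : ∑ j ∈ Finset.Icc 1 (2 * n), m j = 1)
    (μ : Measure ℝ)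
    (hμ : μ = ∑ j ∈ Finset.Icc 1 (2 * n), ENNReal.ofReal (m j) • Measure.dirac (x j))
    (j : ℕ) (hj : j ∈ Finset.Icc 1 (2 * n - 2))
    (h1 : 0 < m (j - 1) + m j) (h2 : 0 < m j + m (j + 1))
    (h3 : 0 < m (j + 1) + m (j + 2)) :
    ∀ z ∈ Icc (x j) (x (j + 1)),
      margInfo r b μ z
        = margInfo r b μ (x j)
          + r * Real.log ((m (j - 1) + m j) / (m (j + 1) + m (j + 2))) * (z - x j) := by
  classical
  have hr2 : 0 < r := by rw [hr]; positivity
  have h2r : 0 < 2 * r := by linarith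
  have hbr : 2 * b * r = 1 := by rw [hr]; field_simp
  have hrn : r < (n : ℝ) := by
    have := Nat.lt_floor_add_one r
    rw [hn]; push_cast; linarith
  have hnr1 : (n : ℝ) - 1 < r := by
    have ha : (⌊r⌋₊ : ℝ) ≤ r := Nat.floor_le hr2.le
    have hb' : (⌊r⌋₊ : ℝ) ≠ r := fun h => hrnat ⟨⌊r⌋₊, h.symm⟩
    rw [hn]; push_cast; linarith [lt_of_le_of_ne ha hb']
  have hmono : StrictMono x := by
    apply strictMono_nat_of_lt_succ
    intro k
    rcases Nat.mod_two_eq_zero_or_one k with hk | hk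
    · rw [hxe k hk, hxo (k+1) (by omega)]
      push_cast
      rw [sub_lt_iff_lt_add, ← add_div, lt_div_iff₀ h2r]
      linarith
    · rw [hxo k hk, hxe (k+1) (by omega)]
      push_cast
      rw [lt_sub_iff_add_lt, ← add_div, div_lt_one h2r]
      linarith
  have hplus2 : ∀ k, x (k + 2) = x k + 2 * b := by
    intro k
    have h2b : 2 * b = 1 / r := by rw [hr]; field_simp
    rcases Nat.mod_two_eq_zero_or_one k with hk | hk
    · rw [hxe k hk, hxe (k+2) (by omega), h2b]
      push_cast; field_simp; ring
    · rw [hxo k hk, hxo (k+2) (by omega), h2b]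
      push_cast; field_simp; ring
  have hx1 : x 1 = 0 := by rw [hxo 1 rfl]; norm_num
  have hx2n : x (2*n) = 1 := by rw [hxe (2*n) (by omega)]; push_cast; ring
  have hx01 : ∀ k, 1 ≤ k → k ≤ 2*n → x k ∈ Icc (0:ℝ) 1 := by
    intro k h1k hk2
    exact ⟨hx1 ▸ hmono.monotone h1k, hx2n ▸ hmono.monotone hk2⟩
  rw [Finset.mem_Icc] at hj
  have hj1 : 1 ≤ j := hj.1
  have hj2n : j + 2 ≤ 2 * n := by omega
  have hjj : j - 1 + 1 = j := by omega
  have hjj2 : j - 1 + 2 = j + 1 := by omega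
  -- spacing facts
  have hgap : x (j+1) ≤ x j + 2 * b := by
    have := hplus2 j
    have h2 : x (j+1) < x (j+2) := hmono (by omega)
    linarith
  have hgap0 : x j < x (j+1) := hmono (by omega)
  -- the pair-window computation
  have winpair : ∀ (a : ℕ) (y : ℝ), a + 1 ≤ 2*n →
      (1 ≤ a → y - b ≤ x a) → (y - b ≤ x (a+1)) → (x (a+1) ≤ y + b) →
      (∀ k, 1 ≤ k → k + 1 ≤ a → x k < y - b) → (∀ k, a + 2 ≤ k → y + b < x k) →
      (μ (Icc (y - b) (y + b) ∩ Icc 0 1)).toReal = m a + m (a+1) := by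
    intro a y haN hxa hxa1 hxa1' hlo hhi
    rw [mass_eval n m hmnn x μ hμ _ (measurableSet_Icc.inter measurableSet_Icc)]
    rw [← pair_sum m (2*n) a hm0 haN]
    refine Finset.sum_congr rfl fun k hk => ?_
    rw [Finset.mem_Icc] at hk
    have hiff : (x k ∈ Icc (y - b) (y + b) ∩ Icc 0 1) ↔ (k = a ∨ k = a + 1) := by
      constructor
      · rintro ⟨⟨hk1, hk2⟩, _⟩
        by_contra hne
        push_neg at hne
        have : k + 1 ≤ a ∨ a + 2 ≤ k := by omega
        rcases this with h | h
        · exact absurd hk1 (not_le.2 (hlo k hk.1 h))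
        · exact absurd hk2 (not_le.2 (hhi k h))
      · rintro (rfl | rfl)
        · exact ⟨⟨hxa hk.1, le_trans (hmono (lt_add_one k)).le hxa1'⟩, hx01 k hk.1 hk.2⟩
        · exact ⟨⟨hxa1, hxa1'⟩, hx01 _ (by omega) haN⟩
    simp only [hiff]
  set A := m (j-1) + m j with hA
  set B := m j + m (j+1) with hB
  set C := m (j+1) + m (j+2) with hC
  -- three mass computations
  have massA : ∀ y ∈ Ioo (x j - b) (x (j+1) - b),
      (μ (Icc (y - b) (y + b) ∩ Icc 0 1)).toReal = A := by
    intro y hy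
    have := winpair (j-1) y (by omega)
      (fun hja => by
        have hx' : x (j+1) = x (j-1) + 2*b := by
          have := hplus2 (j-1); rwa [hjj2] at this
        linarith [hy.2])
      (by rw [hjj]; linarith [hy.2, hgap])
      (by rw [hjj]; linarith [hy.1])
      (fun k hk1 hk2 => by
        have hk2' : k + 2 ≤ j := by omega
        have : x (k+2) ≤ x j := hmono.monotone hk2'
        have := hplus2 k
        linarith [hy.1])
      (fun k hk => by
        have : x (j+1) ≤ x k := hmono.monotone (by omega)
        linarith [hy.2])
    rwa [hjj] at this
  have massB : ∀ y ∈ Ioo (x (j+1) - b) (x j + b),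
      (μ (Icc (y - b) (y + b) ∩ Icc 0 1)).toReal = B := by
    intro y hy
    exact winpair j y (by omega)
      (fun _ => by linarith [hy.2])
      (by linarith [hy.2, hgap0])
      (by linarith [hy.1])
      (fun k hk1 hk2 => by
        have hx' : x (j+1) = x (j-1) + 2*b := by
          have := hplus2 (j-1); rwa [hjj2] at this
        have : x k ≤ x (j-1) := hmono.monotone (by omega)
        linarith [hy.1])
      (fun k hk => by
        have : x (j+2) ≤ x k := hmono.monotone hk
        have := hplus2 j
        linarith [hy.2])
  have massC : ∀ y ∈ Ioo (x j + b) (x (j+1) + b),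
      (μ (Icc (y - b) (y + b) ∩ Icc 0 1)).toReal = C := by
    intro y hy
    exact winpair (j+1) y hj2n
      (fun _ => by linarith [hy.2])
      (by have := hplus2 j; linarith [hy.2, hgap])
      (by have := hplus2 j; linarith [hy.1])
      (fun k hk1 hk2 => by
        have : x k ≤ x j := hmono.monotone (by omega)
        linarith [hy.1])
      (fun k hk => by
        have hx' : x (j+3) = x (j+1) + 2*b := hplus2 (j+1)
        have : x (j+3) ≤ x k := hmono.monotone hk
        linarith [hy.2])
  -- integrand is a step function
  have hfA : ∀ y ∈ Ioo (x j - b) (x (j+1) - b),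
      Real.log (2 * b * outDen r b μ y) = Real.log A := by
    intro y hy
    rw [outDen, show 2*b*(r * (μ (Icc (y - b) (y + b) ∩ Icc 0 1)).toReal)
      = 2*b*r * (μ (Icc (y - b) (y + b) ∩ Icc 0 1)).toReal from by ring, hbr, one_mul,
      massA y hy]
  have hfB : ∀ y ∈ Ioo (x (j+1) - b) (x j + b),
      Real.log (2 * b * outDen r b μ y) = Real.log B := by
    intro y hy
    rw [outDen, show 2*b*(r * (μ (Icc (y - b) (y + b) ∩ Icc 0 1)).toReal)
      = 2*b*r * (μ (Icc (y - b) (y + b) ∩ Icc 0 1)).toReal from by ring, hbr, one_mul,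
      massB y hy]
  have hfC : ∀ y ∈ Ioo (x j + b) (x (j+1) + b),
      Real.log (2 * b * outDen r b μ y) = Real.log C := by
    intro y hy
    rw [outDen, show 2*b*(r * (μ (Icc (y - b) (y + b) ∩ Icc 0 1)).toReal)
      = 2*b*r * (μ (Icc (y - b) (y + b) ∩ Icc 0 1)).toReal from by ring, hbr, one_mul,
      massC y hy]
  -- affine formula
  have key : ∀ z ∈ Icc (x j) (x (j+1)),
      margInfo r b μ z = -r * (Real.log A * (x (j+1) - z)
        + Real.log B * (2*b - (x (j+1) - x j)) + Real.log C * (z - x j)) := by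
    intro z hz
    obtain ⟨hz1, hz2⟩ := hz
    have P1 := step_int (f := fun y => Real.log (2 * b * outDen r b μ y))
      (by linarith : x j - b ≤ z - b) (by linarith : z - b ≤ x (j+1) - b)
      (le_refl (x (j+1) - b)) hfA
    have P2 := step_int (f := fun y => Real.log (2 * b * outDen r b μ y))
      (le_refl (x (j+1) - b)) (by linarith : x (j+1) - b ≤ x j + b)
      (le_refl (x j + b)) hfB
    have P3 := step_int (f := fun y => Real.log (2 * b * outDen r b μ y))
      (le_refl (x j + b)) (by linarith : x j + b ≤ z + b)
      (by linarith : z + b ≤ x (j+1) + b) hfC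
    rw [margInfo]
    rw [← intervalIntegral.integral_add_adjacent_intervals (P1.1.trans P2.1) P3.1,
      ← intervalIntegral.integral_add_adjacent_intervals P1.1 P2.1,
      P1.2, P2.2, P3.2]
    ring
  intro z hz
  rw [key z hz, key (x j) ⟨le_refl _, hgap0.le⟩,
    Real.log_div h1.ne' h3.ne']
  ring
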